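/- arXiv:2307.11679 — 2 statements merged into one kernel-verified Lean document; each statement's English description precedes it below -/
import Mathlib

section
/- Let ω ⊂ ℝ^d be bounded, open, and let M ⊂ ∂ω be closed and nonempty. Fix c, ζ ∈ (0,1) such that 1 − c(1+ζ) > 0. For x ∈ ω let B_x be the closed ball of radius c·dist(x,M) centered at x, and let B̂_x be the closed ball of radius (1+ζ)·c·dist(x,M) centered at x. Then there is a countable set of points (x_i)_{i∈I} ⊂ ω (I ⊂ ℕ) and a number N ∈ ℕ depending only on d, c, ζ such that: (1) the balls B_{x_i} cover ω, i.e. ⋃_i B_{x_i} ⊇ ω; and (2) for every x ∈ ℝ^d, the number of indices i with x ∈ B̂_{x_i} is at most N. -/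
noncomputable section
open MeasureTheory Metric Set
open scoped ENNReal NNReal


lemma packing_card (d : ℕ) {κ r : ℝ} (hκ : 0 < κ) (hr : 0 < r)
    (p : EuclideanSpace ℝ (Fin d)) (t : Finset (EuclideanSpace ℝ (Fin d)))
    (h1 : ∀ x ∈ t, dist p x ≤ κ * r)
    (h2 : ∀ x ∈ t, ∀ y ∈ t, x ≠ y → r ≤ dist x y) :
    (t.card : ℝ) ≤ (3 * (κ + 1)) ^ d := by
  set V := volume (ball (0 : EuclideanSpace ℝ (Fin d)) 1) with hV
  have hV0 : V ≠ 0 := (measure_ball_pos volume 0 one_pos).ne'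
  have hVt : V ≠ ⊤ := measure_ball_lt_top.ne
  have hr3 : (0:ℝ) ≤ r / 3 := by linarith
  have hdisj : (↑t : Set (EuclideanSpace ℝ (Fin d))).PairwiseDisjoint
      (fun x => closedBall x (r / 3)) := by
    intro x hx y hy hxy
    exact closedBall_disjoint_closedBall (by have := h2 x hx y hy hxy; linarith)
  have hsum : ∑ x ∈ t, volume (closedBall x (r/3))
      = volume (⋃ x ∈ t, closedBall x (r/3)) :=
    (measure_biUnion_finset hdisj (fun x _ => measurableSet_closedBall)).symm
  have hsub : (⋃ x ∈ t, closedBall x (r/3)) ⊆ closedBall p ((κ + 1) * r) := by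
    intro z hz
    simp only [mem_iUnion, exists_prop] at hz
    obtain ⟨x, hx, hzx⟩ := hz
    have h1' := h1 x hx
    have : dist z p ≤ dist z x + dist x p := dist_triangle z x p
    rw [mem_closedBall] at hzx ⊢
    rw [dist_comm x p] at this
    nlinarith
  have hball : ∀ x : EuclideanSpace ℝ (Fin d),
      volume (closedBall x (r/3)) = ENNReal.ofReal ((r/3) ^ d) * V := by
    intro x
    rw [Measure.addHaar_closedBall volume x hr3, finrank_euclideanSpace_fin]
  have hbig : volume (closedBall p ((κ+1)*r)) = ENNReal.ofReal (((κ+1)*r) ^ d) * V := by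
    rw [Measure.addHaar_closedBall volume p (by positivity), finrank_euclideanSpace_fin]
  have key : (t.card : ℝ≥0∞) * (ENNReal.ofReal ((r/3) ^ d) * V)
      ≤ ENNReal.ofReal (((κ+1)*r) ^ d) * V := by
    calc (t.card : ℝ≥0∞) * (ENNReal.ofReal ((r/3) ^ d) * V)
        = ∑ x ∈ t, volume (closedBall x (r/3)) := by
          simp [hball, Finset.sum_const, nsmul_eq_mul]
      _ = volume (⋃ x ∈ t, closedBall x (r/3)) := hsum
      _ ≤ volume (closedBall p ((κ+1)*r)) := measure_mono hsub
      _ = _ := hbig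
  rw [← mul_assoc] at key
  have key2 : (t.card : ℝ≥0∞) * ENNReal.ofReal ((r/3) ^ d)
      ≤ ENNReal.ofReal (((κ+1)*r) ^ d) :=
    (ENNReal.mul_le_mul_iff_left hV0 hVt).1 key
  have key3 : (t.card : ℝ) * (r/3) ^ d ≤ ((κ+1)*r) ^ d := by
    have h1 : ENNReal.ofReal ((t.card : ℝ) * (r/3) ^ d)
        ≤ ENNReal.ofReal (((κ+1)*r) ^ d) := by
      rwa [ENNReal.ofReal_mul (by positivity), ENNReal.ofReal_natCast]
    exact (ENNReal.ofReal_le_ofReal_iff (by positivity)).1 h1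
  have hpow : ((κ+1)*r) ^ d = (3*(κ+1)) ^ d * (r/3) ^ d := by
    rw [← mul_pow]; congr 1; ring
  rw [hpow] at key3
  have h3 : (0:ℝ) < (r/3) ^ d := by positivity
  exact le_of_mul_le_mul_right key3 h3

lemma finite_and_ncard_le {α : Type*} {s : Set α} {N : ℕ}
    (h : ∀ t : Finset α, ↑t ⊆ s → t.card ≤ N) : s.Finite ∧ s.ncard ≤ N := by
  have hfin : s.Finite := by
    by_contra hinf
    obtain ⟨t, hts, htf, hcard⟩ := (Set.Infinite.exists_subset_ncard_eq hinf (N+1))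
    have := h htf.toFinset (by simpa using hts)
    rw [← Set.ncard_eq_toFinset_card t htf] at this
    omega
  refine ⟨hfin, ?_⟩
  have := h hfin.toFinset (by simp)
  rwa [← Set.ncard_eq_toFinset_card s hfin] at this

lemma finite_of_separated (d : ℕ) {s : Set (EuclideanSpace ℝ (Fin d))} {r : ℝ} (hr : 0 < r)
    (hb : Bornology.IsBounded s)
    (hsep : ∀ x ∈ s, ∀ y ∈ s, x ≠ y → r ≤ dist x y) : s.Finite := by
  obtain ⟨K, hK⟩ := hb.subset_closedBall (0 : EuclideanSpace ℝ (Fin d))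
  set κ : ℝ := max (K / r) 1 with hκdef
  have hκ : 0 < κ := lt_of_lt_of_le one_pos (le_max_right _ _)
  refine (finite_and_ncard_le (N := ⌈(3*(κ+1))^d⌉₊) (fun t hts => ?_)).1
  have hb1 : ∀ x ∈ t, dist (0 : EuclideanSpace ℝ (Fin d)) x ≤ κ * r := by
    intro x hx
    have hxK : dist x 0 ≤ K := hK (hts hx)
    have : K ≤ κ * r := by
      have : K / r ≤ κ := le_max_left _ _
      calc K = (K / r) * r := by field_simp
        _ ≤ κ * r := by nlinarith
    rw [dist_comm]; linarith
  have := packing_card d hκ hr 0 t hb1 (fun x hx y hy hxy => hsep x (hts hx) y (hts hy) hxy)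
  have h2 : ((3*(κ+1))^d : ℝ) ≤ (⌈(3*(κ+1))^d⌉₊ : ℝ) := Nat.le_ceil _
  exact_mod_cast this.trans h2

/-- Besicovitch-type covering with finite overlap, Lemma 5.1. -/
theorem statement1 (d : ℕ) (c ζ : ℝ) (hc : c ∈ Set.Ioo (0 : ℝ) 1)
    (hζ : ζ ∈ Set.Ioo (0 : ℝ) 1) (hcz : 0 < 1 - c * (1 + ζ)) :
    ∃ N : ℕ, ∀ ω M : Set (EuclideanSpace ℝ (Fin d)),
      IsOpen ω → Bornology.IsBounded ω → IsClosed M → M ⊆ frontier ω → M.Nonempty →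
      ∃ (I : Set ℕ) (x : ℕ → EuclideanSpace ℝ (Fin d)),
        (∀ i ∈ I, x i ∈ ω) ∧
        (ω ⊆ ⋃ i ∈ I, Metric.closedBall (x i) (c * Metric.infDist (x i) M)) ∧
        ∀ p : EuclideanSpace ℝ (Fin d),
          ({i ∈ I | p ∈ Metric.closedBall (x i) ((1 + ζ) * c * Metric.infDist (x i) M)}).Finite ∧
          ({i ∈ I | p ∈ Metric.closedBall (x i)
              ((1 + ζ) * c * Metric.infDist (x i) M)}).ncard ≤ N := by
  classical
  obtain ⟨hc0, hc1⟩ := hc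
  obtain ⟨hζ0, hζ1⟩ := hζ
  set γ : ℝ := 1 - c * (1 + ζ) with hγdef
  have hγ : 0 < γ := hcz
  set κ₀ : ℝ := 2 * (1 + ζ) / γ with hκ₀def
  have hκ₀ : 0 < κ₀ := by positivity
  refine ⟨⌈(3 * (κ₀ + 1)) ^ d⌉₊, fun ω M hω hbω hM hMf hMne => ?_⟩
  set D : EuclideanSpace ℝ (Fin d) → ℝ := fun x => infDist x M with hDdef
  have hD : ∀ x ∈ ω, 0 < D x := by
    intro x hx
    rw [← (hM.notMem_iff_infDist_pos hMne)]
    intro hxM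
    have := hMf hxM
    rw [hω.frontier_eq] at this
    exact this.2 hx
  have hDnn : ∀ x, 0 ≤ D x := fun x => infDist_nonneg
  have hLip : ∀ x y : EuclideanSpace ℝ (Fin d), D x ≤ D y + dist x y := fun x y =>
    infDist_le_infDist_add_dist
  -- the family for Zorn
  set F : Set (Set (EuclideanSpace ℝ (Fin d))) :=
    {S | S ⊆ ω ∧ ∀ x ∈ S, ∀ y ∈ S, x ≠ y → c * min (D x) (D y) < dist x y} with hFdef
  obtain ⟨S, hSF, hSmax⟩ : ∃ S, Maximal (· ∈ F) S := by
    apply zorn_subset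
    intro ch hch hchain
    refine ⟨⋃₀ ch, ⟨?_, ?_⟩, fun s hs => subset_sUnion_of_mem hs⟩
    · exact sUnion_subset fun s hs => (hch hs).1
    · intro x hx y hy hxy
      obtain ⟨s1, hs1, hxs1⟩ := hx
      obtain ⟨s2, hs2, hys2⟩ := hy
      rcases hchain.total hs1 hs2 with h | h
      · exact (hch hs2).2 x (h hxs1) y hys2 hxy
      · exact (hch hs1).2 x hxs1 y (h hys2) hxy
  obtain ⟨hSω, hSsep⟩ := hSF
  -- covering property
  have hcover : ∀ y ∈ ω, ∃ x ∈ S, dist y x ≤ c * D x := by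
    intro y hy
    by_cases hyS : y ∈ S
    · exact ⟨y, hyS, by simpa using mul_nonneg hc0.le (hDnn y)⟩
    · have hins : insert y S ∉ F := by
        intro hmem
        exact hyS (hSmax hmem (subset_insert y S) (mem_insert y S))
      have hinsω : insert y S ⊆ ω := insert_subset hy hSω
      rw [hFdef, mem_setOf_eq] at hins
      push_neg at hins
      obtain ⟨a, ha, b, hb, hab, hd⟩ := hins hinsω
      rcases mem_insert_iff.1 ha with rfl | haS
      · rcases mem_insert_iff.1 hb with rfl | hbS
        · exact absurd rfl hab
        · refine ⟨b, hbS, ?_⟩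
          calc dist a b ≤ c * min (D a) (D b) := hd
            _ ≤ c * D b := mul_le_mul_of_nonneg_left (min_le_right _ _) hc0.le
      · rcases mem_insert_iff.1 hb with rfl | hbS
        · refine ⟨a, haS, ?_⟩
          rw [dist_comm]
          calc dist a b ≤ c * min (D a) (D b) := hd
            _ ≤ c * D a := mul_le_mul_of_nonneg_left (min_le_left _ _) hc0.le
        · exact absurd hd (not_le.2 (hSsep a haS b hbS hab))
  -- countability
  have hScount : S.Countable := by
    have hdecomp : S = ⋃ n : ℕ, {x ∈ S | 1 / (n + 1 : ℝ) ≤ D x} := by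
      ext x
      simp only [mem_iUnion, mem_setOf_eq]
      constructor
      · intro hx
        obtain ⟨n, hn⟩ := exists_nat_one_div_lt (hD x (hSω hx))
        exact ⟨n, hx, hn.le⟩
      · rintro ⟨n, hx, -⟩; exact hx
    rw [hdecomp]
    refine countable_iUnion fun n => Set.Finite.countable ?_
    refine finite_of_separated d (r := c * (1 / (n + 1 : ℝ)))
      (by positivity) (hbω.subset (fun x hx => hSω hx.1)) ?_
    intro x hx y hy hxy
    have := hSsep x hx.1 y hy.1 hxy
    have hmin : (1 : ℝ) / (n + 1) ≤ min (D x) (D y) := le_min hx.2 hy.2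
    nlinarith
  -- nonemptiness
  have hSne : S.Nonempty := by
    obtain ⟨m, hm⟩ := hMne
    have hmcl : m ∈ closure ω := frontier_subset_closure (hMf hm)
    have hωne : ω.Nonempty := by
      by_contra h
      rw [not_nonempty_iff_eq_empty] at h
      simp [h] at hmcl
    obtain ⟨y, hy⟩ := hωne
    obtain ⟨x, hxS, -⟩ := hcover y hy
    exact ⟨x, hxS⟩
  obtain ⟨f, hf⟩ := hScount.exists_eq_range hSne
  set I : Set ℕ := {n | ∀ m, m < n → f m ≠ f n} with hIdef
  have hfS : ∀ n, f n ∈ S := by intro n; rw [hf]; exact mem_range_self n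
  have hInj : InjOn f I := by
    intro a ha b hb hab
    by_contra hne
    rcases lt_trichotomy a b with h | h | h
    · exact hb a h hab
    · exact hne h
    · exact ha b h hab.symm
  have hfirst : ∀ x ∈ S, ∃ i ∈ I, f i = x := by
    intro x hx
    rw [hf] at hx
    obtain ⟨n, hn⟩ := hx
    have hex : ∃ k, f k = x := ⟨n, hn⟩
    refine ⟨Nat.find hex, ?_, Nat.find_spec hex⟩
    intro m hm heq
    exact Nat.find_min hex hm (heq.trans (Nat.find_spec hex))
  refine ⟨I, f, fun i _ => hSω (hfS i), ?_, ?_⟩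
  · -- covering
    intro y hy
    obtain ⟨x, hxS, hdist⟩ := hcover y hy
    obtain ⟨i, hiI, hfi⟩ := hfirst x hxS
    refine mem_biUnion hiI ?_
    rw [mem_closedBall, hfi]
    exact hdist
  · -- overlap
    intro p
    set T : Set (EuclideanSpace ℝ (Fin d)) :=
      {x ∈ S | dist p x ≤ (1 + ζ) * c * D x} with hTdef
    have hTcard : ∀ t : Finset (EuclideanSpace ℝ (Fin d)), ↑t ⊆ T →
        t.card ≤ ⌈(3 * (κ₀ + 1)) ^ d⌉₊ := by
      intro t hts
      rcases t.eq_empty_or_nonempty with rfl | ⟨x₀, hx₀⟩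
      · simp
      · have hx₀T : x₀ ∈ T := hts hx₀
        have hDle : ∀ x ∈ T, γ * D x ≤ D p := by
          intro x hx
          have h1 := hLip x p
          have h2 := hx.2
          rw [dist_comm x p] at h1
          have hγx : γ * D x = D x - (1 + ζ) * c * D x := by rw [hγdef]; ring
          linarith
        have hDge : ∀ x ∈ T, D p ≤ 2 * D x := by
          intro x hx
          have h1 := hLip p x
          have h2 := hx.2
          have h3 := hDnn x
          nlinarith
        have hDp : 0 < D p := by
          have := hDle x₀ hx₀T
          have := hD x₀ (hSω hx₀T.1)
          nlinarith
        set r : ℝ := c * D p / 2 with hrdef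
        have hr : 0 < r := by positivity
        have hb1 : ∀ x ∈ t, dist p x ≤ κ₀ * r := by
          intro x hx
          have hxT := hts hx
          have h1 := hxT.2
          have h2 := hDle x hxT
          have hκr : κ₀ * r = (1 + ζ) * c * D p / γ := by
            rw [hκ₀def, hrdef]; field_simp
          rw [hκr, le_div_iff₀ hγ]
          have ha : dist p x * γ ≤ ((1 + ζ) * c * D x) * γ :=
            mul_le_mul_of_nonneg_right h1 hγ.le
          have hb : (1 + ζ) * c * (γ * D x) ≤ (1 + ζ) * c * D p :=
            mul_le_mul_of_nonneg_left h2 (by positivity)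
          nlinarith [ha, hb]
        have hb2 : ∀ x ∈ t, ∀ y ∈ t, x ≠ y → r ≤ dist x y := by
          intro x hx y hy hxy
          have hxT := hts hx
          have hyT := hts hy
          have hs := hSsep x hxT.1 y hyT.1 hxy
          have h1 := hDge x hxT
          have h2 := hDge y hyT
          have hmin : D p / 2 ≤ min (D x) (D y) := le_min (by linarith) (by linarith)
          have : c * (D p / 2) ≤ c * min (D x) (D y) :=
            mul_le_mul_of_nonneg_left hmin hc0.le
          rw [hrdef]
          linarith
        have := packing_card d hκ₀ hr p t hb1 hb2
        have h2 : ((3 * (κ₀ + 1)) ^ d : ℝ) ≤ (⌈(3 * (κ₀ + 1)) ^ d⌉₊ : ℝ) := Nat.le_ceil _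
        exact_mod_cast this.trans h2
    obtain ⟨hTfin, hTcard'⟩ := finite_and_ncard_le hTcard
    set A : Set ℕ := {i ∈ I | p ∈ closedBall (f i) ((1 + ζ) * c * infDist (f i) M)} with hAdef
    have himg : f '' A ⊆ T := by
      rintro - ⟨i, hi, rfl⟩
      exact ⟨hfS i, by simpa [dist_comm] using (mem_closedBall.1 hi.2)⟩
    have hinjA : InjOn f A := hInj.mono (fun i hi => hi.1)
    have hAfin : A.Finite := Set.Finite.of_finite_image (hTfin.subset himg) hinjA
    refine ⟨hAfin, ?_⟩
    calc A.ncard = (f '' A).ncard := (Set.ncard_image_of_injOn hinjA).symm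
      _ ≤ T.ncard := Set.ncard_le_ncard himg hTfin
      _ ≤ _ := hTcard'
end
end

section
/- Let 𝒴 > 0 and α ∈ (−1,1). There exists a constant C > 0 (depending only on 𝒴 and α) such that for every function v : [0,𝒴] → ℝ that is continuous on [0,𝒴] and continuously differentiable on (0,𝒴) with ∫₀^𝒴 y^α v(y)² dy < ∞ and ∫₀^𝒴 y^α v′(y)² dy < ∞, it holds that |v(0)|² ≤ C ( (∫₀^𝒴 y^α v(y)² dy)^{(1−α)/2} · (∫₀^𝒴 y^α v′(y)² dy)^{(1+α)/2} + ∫₀^𝒴 y^α v(y)² dy ). -/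
/-!
Cauchy–Schwarz applied to `v' = t^(-α/2) · t^(α/2) v'` gives
`|v(y) - v(0)|² ≤ y^(1-α)/(1-α) · ‖v'‖²_{L²_α}` for every `y`, since `t^(-α)` is integrable
at `0` exactly when `α < 1`. Writing `v(0)² ≤ 2 v(y)² + 2 |v(y) - v(0)|²` and averaging against
`y^α` over `(0, δ)` (integrable since `α > -1`) yields
`v(0)² δ^(α+1) ≲ ‖v‖²_{L²_α} + ‖v'‖²_{L²_α} δ²` for all `δ ≤ 𝒴`, and choosing
`δ = min(𝒴, ‖v‖/‖v'‖)` gives the multiplicative bound.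
-/

open MeasureTheory Set Filter Topology

theorem sq_integral_mul_le {X : Type*} [MeasurableSpace X] {μ : Measure X} {f g : X → ℝ}
    (hf : MemLp f 2 μ) (hg : MemLp g 2 μ) :
    (∫ x, f x * g x ∂μ) ^ 2 ≤ (∫ x, f x ^ 2 ∂μ) * ∫ x, g x ^ 2 ∂μ := by
  have hsq : ∀ u : X → ℝ, ∫ x, ‖u x‖ ^ (2 : ℝ) ∂μ = ∫ x, u x ^ 2 ∂μ := fun u => by
    simp only [Real.rpow_two, Real.norm_eq_abs, sq_abs]
  have holder := integral_mul_norm_le_Lp_mul_Lq .two_two (by simpa using hf) (by simpa using hg)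
  rw [hsq, hsq] at holder
  have hf2 : 0 ≤ ∫ x, f x ^ 2 ∂μ := integral_nonneg fun x => sq_nonneg _
  have hg2 : 0 ≤ ∫ x, g x ^ 2 ∂μ := integral_nonneg fun x => sq_nonneg _
  calc (∫ x, f x * g x ∂μ) ^ 2 ≤ (∫ x, ‖f x‖ * ‖g x‖ ∂μ) ^ 2 := by
        rw [← sq_abs]
        gcongr
        exact (norm_integral_le_integral_norm _).trans_eq
          (integral_congr_ae (.of_forall fun x => norm_mul (f x) (g x)))
    _ ≤ ((∫ x, f x ^ 2 ∂μ) ^ (1 / 2 : ℝ) * (∫ x, g x ^ 2 ∂μ) ^ (1 / 2 : ℝ)) ^ 2 := by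
        gcongr
    _ = (∫ x, f x ^ 2 ∂μ) * ∫ x, g x ^ 2 ∂μ := by
        rw [mul_pow, ← Real.sqrt_eq_rpow, ← Real.sqrt_eq_rpow, Real.sq_sqrt hf2, Real.sq_sqrt hg2]

theorem integral_Ioo_rpow {r b : ℝ} (hr : -1 < r) (hb : 0 ≤ b) :
    ∫ t in Ioo 0 b, t ^ r = b ^ (r + 1) / (r + 1) := by
  rw [← integral_Ioc_eq_integral_Ioo, ← intervalIntegral.integral_of_le hb, integral_rpow (.inl hr),
    Real.zero_rpow (by linarith), sub_zero]

/-- `‖u‖²` in `L²_α((0, b))`. -/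
noncomputable def weightedSqNorm (α b : ℝ) (u : ℝ → ℝ) : ℝ := ∫ t in Ioo 0 b, t ^ α * u t ^ 2

theorem weightedSqNorm_nonneg (α b : ℝ) (u : ℝ → ℝ) : 0 ≤ weightedSqNorm α b u :=
  setIntegral_nonneg measurableSet_Ioo fun _ ht =>
    mul_nonneg (Real.rpow_nonneg ht.1.le _) (sq_nonneg _)

theorem weightedSqNorm_mono {α a b : ℝ} {u : ℝ → ℝ} (hab : a ≤ b)
    (hu : IntegrableOn (fun t => t ^ α * u t ^ 2) (Ioo 0 b)) :
    weightedSqNorm α a u ≤ weightedSqNorm α b u :=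
  setIntegral_mono_set hu
    (ae_restrict_of_forall_mem measurableSet_Ioo fun _ ht =>
      mul_nonneg (Real.rpow_nonneg ht.1.le _) (sq_nonneg _))
    (Ioo_subset_Ioo_right hab).eventuallyLE

theorem sq_sub_le_mul_weightedSqNorm_deriv {α y : ℝ} (hα : α < 1) (hy : 0 < y)
    {v : ℝ → ℝ} (hvc : ContinuousOn v (Icc 0 y)) (hvd : DifferentiableOn ℝ v (Ioo 0 y))
    (hD : IntegrableOn (fun t => t ^ α * deriv v t ^ 2) (Ioo 0 y)) :
    (v y - v 0) ^ 2 ≤ y ^ (1 - α) / (1 - α) * weightedSqNorm α y (deriv v) := by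
  set f : ℝ → ℝ := fun t => t ^ (-(α / 2))
  set g : ℝ → ℝ := fun t => t ^ (α / 2) * deriv v t
  have hfg : EqOn (fun t => f t * g t) (deriv v) (Ioo 0 y) := fun _ ht => by
    simp only [f, g, ← mul_assoc, ← Real.rpow_add ht.1, neg_add_cancel, Real.rpow_zero, one_mul]
  have hf2 : EqOn (fun t => f t ^ 2) (fun t => t ^ (-α)) (Ioo 0 y) := fun _ ht => by
    simp only [f, ← Real.rpow_natCast, ← Real.rpow_mul ht.1.le]
    ring_nf
  have hg2 : EqOn (fun t => g t ^ 2) (fun t => t ^ α * deriv v t ^ 2) (Ioo 0 y) := fun _ ht => by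
    simp only [g, mul_pow, ← Real.rpow_natCast, ← Real.rpow_mul ht.1.le]
    ring_nf
  have hf : MemLp f 2 (volume.restrict (Ioo 0 y)) :=
    (memLp_two_iff_integrable_sq (measurable_id.pow_const _).aestronglyMeasurable).2 <|
      ((intervalIntegral.integrableOn_Ioo_rpow_iff hy).2 (by linarith)).congr_fun hf2.symm
        measurableSet_Ioo
  have hg : MemLp g 2 (volume.restrict (Ioo 0 y)) :=
    (memLp_two_iff_integrable_sq ((measurable_id.pow_const _).mul
      (measurable_deriv v)).aestronglyMeasurable).2 <| hD.congr_fun hg2.symm measurableSet_Ioo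
  have hftc : v y - v 0 = ∫ t in Ioo 0 y, deriv v t := by
    rw [← integral_Ioc_eq_integral_Ioo, ← intervalIntegral.integral_of_le hy.le]
    refine (intervalIntegral.integral_eq_sub_of_hasDerivAt_of_le hy.le hvc
      (fun _ ht => (hvd.differentiableAt (isOpen_Ioo.mem_nhds ht)).hasDerivAt) ?_).symm
    rw [intervalIntegrable_iff_integrableOn_Ioo_of_le hy.le]
    exact IntegrableOn.congr_fun (hf.integrable_mul hg) hfg measurableSet_Ioo
  calc (v y - v 0) ^ 2 = (∫ t in Ioo 0 y, f t * g t) ^ 2 := by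
        rw [hftc, setIntegral_congr_fun measurableSet_Ioo hfg]
    _ ≤ (∫ t in Ioo 0 y, f t ^ 2) * ∫ t in Ioo 0 y, g t ^ 2 := sq_integral_mul_le hf hg
    _ = y ^ (1 - α) / (1 - α) * weightedSqNorm α y (deriv v) := by
        rw [weightedSqNorm, setIntegral_congr_fun measurableSet_Ioo hf2,
          setIntegral_congr_fun measurableSet_Ioo hg2,
          integral_Ioo_rpow (by linarith) hy.le, neg_add_eq_sub]

theorem rpow_mul_sq_apply_zero_le {Y α t : ℝ} (hα : α < 1) (ht : t ∈ Ioc 0 Y) {v : ℝ → ℝ}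
    (hvc : ContinuousOn v (Icc 0 Y)) (hvd : DifferentiableOn ℝ v (Ioo 0 Y))
    (hD : IntegrableOn (fun t => t ^ α * deriv v t ^ 2) (Ioo 0 Y)) :
    t ^ α * v 0 ^ 2 ≤ 2 * (t ^ α * v t ^ 2) + 2 * weightedSqNorm α Y (deriv v) / (1 - α) * t := by
  obtain ⟨ht, htY⟩ := ht
  set D := weightedSqNorm α Y (deriv v)
  have hdiff : (v t - v 0) ^ 2 ≤ t ^ (1 - α) / (1 - α) * D :=
    (sq_sub_le_mul_weightedSqNorm_deriv hα ht (hvc.mono (Icc_subset_Icc_right htY))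
      (hvd.mono (Ioo_subset_Ioo_right htY)) (hD.mono_set (Ioo_subset_Ioo_right htY))).trans
      (by gcongr; exact weightedSqNorm_mono htY hD)
  have hw : t ^ α * t ^ (1 - α) = t := by
    rw [← Real.rpow_add ht, add_sub_cancel, Real.rpow_one]
  calc t ^ α * v 0 ^ 2 ≤ t ^ α * (2 * v t ^ 2 + 2 * (v t - v 0) ^ 2) := by
        gcongr
        nlinarith [sq_nonneg (2 * v t - v 0)]
    _ ≤ t ^ α * (2 * v t ^ 2 + 2 * (t ^ (1 - α) / (1 - α) * D)) := by gcongr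
    _ = 2 * (t ^ α * v t ^ 2) + 2 * D / (1 - α) * (t ^ α * t ^ (1 - α)) := by ring
    _ = 2 * (t ^ α * v t ^ 2) + 2 * D / (1 - α) * t := by rw [hw]

theorem sq_mul_rpow_le_weightedSqNorm {Y α δ : ℝ} (hα₁ : -1 < α) (hα₂ : α < 1)
    (hδ : δ ∈ Ioc 0 Y) {v : ℝ → ℝ} (hvc : ContinuousOn v (Icc 0 Y))
    (hvd : DifferentiableOn ℝ v (Ioo 0 Y)) (hA : IntegrableOn (fun t => t ^ α * v t ^ 2) (Ioo 0 Y))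
    (hD : IntegrableOn (fun t => t ^ α * deriv v t ^ 2) (Ioo 0 Y)) :
    v 0 ^ 2 * δ ^ (α + 1) ≤
      (α + 1) * (2 * weightedSqNorm α Y v + weightedSqNorm α Y (deriv v) * δ ^ 2 / (1 - α)) := by
  set D := weightedSqNorm α Y (deriv v)
  have hδY : Ioo 0 δ ⊆ Ioo 0 Y := Ioo_subset_Ioo_right hδ.2
  have hAδ : IntegrableOn (fun t => 2 * (t ^ α * v t ^ 2)) (Ioo 0 δ) :=
    (hA.mono_set hδY).const_mul 2
  have hlinδ : IntegrableOn (fun t : ℝ => 2 * D / (1 - α) * t) (Ioo 0 δ) :=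
    (continuous_const.mul continuous_id).integrableOn_Icc.mono_set Ioo_subset_Icc_self
  have hint := setIntegral_mono_on (g := fun t => 2 * (t ^ α * v t ^ 2) + 2 * D / (1 - α) * t)
    (((intervalIntegral.integrableOn_Ioo_rpow_iff hδ.1).2 hα₁).mul_const (v 0 ^ 2))
    (hAδ.add hlinδ) measurableSet_Ioo fun t ht =>
      rpow_mul_sq_apply_zero_le hα₂ ⟨ht.1, ht.2.le.trans hδ.2⟩ hvc hvd hD
  have hlin : ∫ t in Ioo 0 δ, t = δ ^ 2 / 2 := by
    rw [← integral_Ioc_eq_integral_Ioo, ← intervalIntegral.integral_of_le hδ.1.le, integral_id]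
    ring
  rw [integral_mul_const, integral_Ioo_rpow hα₁ hδ.1.le, integral_add hAδ hlinδ, integral_const_mul,
    integral_const_mul, hlin] at hint
  have hα1 : 0 < α + 1 := by linarith
  calc v 0 ^ 2 * δ ^ (α + 1) = (α + 1) * (δ ^ (α + 1) / (α + 1) * v 0 ^ 2) := by field_simp
    _ ≤ (α + 1) * (2 * weightedSqNorm α δ v + D * δ ^ 2 / (1 - α)) := by
      gcongr
      exact hint.trans_eq (by rw [weightedSqNorm]; ring)
    _ ≤ _ := by gcongr; exact weightedSqNorm_mono hδ.2 hA

theorem nonpos_of_forall_mul_rpow_le_mul_sq {Y α b x : ℝ} (hY : 0 < Y) (hα : α < 1)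
    (h : ∀ δ ∈ Ioc 0 Y, x * δ ^ (α + 1) ≤ b * δ ^ 2) : x ≤ 0 := by
  have hlim : Tendsto (fun δ : ℝ => b * δ ^ (1 - α)) (𝓝[>] 0) (𝓝 0) := by
    have := ((Real.continuousAt_rpow_const 0 (1 - α) (.inr (by linarith))).tendsto.const_mul
      b).mono_left (nhdsWithin_le_nhds (s := Ioi 0))
    rwa [Real.zero_rpow (by linarith), mul_zero] at this
  refine ge_of_tendsto hlim ?_
  filter_upwards [Ioo_mem_nhdsGT hY] with δ hδ
  have hδα : 0 < δ ^ (α + 1) := Real.rpow_pos_of_pos hδ.1 _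
  refine le_of_mul_le_mul_right ?_ hδα
  calc x * δ ^ (α + 1) ≤ b * δ ^ 2 := h δ ⟨hδ.1, hδ.2.le⟩
    _ = b * δ ^ (1 - α) * δ ^ (α + 1) := by
      rw [mul_assoc, ← Real.rpow_add hδ.1, show 1 - α + (α + 1) = 2 by ring, Real.rpow_two]

theorem le_of_forall_mul_rpow_le_mul_add_mul_sq {Y α c A D x : ℝ} (hY : 0 < Y) (hα : α < 1)
    (hc : 0 ≤ c) (hA : 0 ≤ A) (hD : 0 ≤ D)
    (h : ∀ δ ∈ Ioc 0 Y, x * δ ^ (α + 1) ≤ c * (A + D * δ ^ 2)) :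
    x ≤ 2 * c * (A ^ ((1 - α) / 2) * D ^ ((1 + α) / 2) + A / Y ^ (α + 1)) := by
  have hM : 0 ≤ A ^ ((1 - α) / 2) * D ^ ((1 + α) / 2) := by positivity
  rcases hA.eq_or_lt with rfl | hA
  · exact (nonpos_of_forall_mul_rpow_le_mul_sq (b := c * D) hY hα fun δ hδ => by
      simpa [mul_assoc] using h δ hδ).trans (by positivity)
  rcases le_or_gt (D * Y ^ 2) A with hYA | hAY
  · have hYα : 0 < Y ^ (α + 1) := Real.rpow_pos_of_pos hY _
    calc x ≤ 2 * c * A / Y ^ (α + 1) := by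
          rw [le_div_iff₀ hYα]
          nlinarith [h Y ⟨hY, le_rfl⟩]
      _ ≤ 2 * c * (A ^ ((1 - α) / 2) * D ^ ((1 + α) / 2) + A / Y ^ (α + 1)) := by
        rw [mul_div_assoc]
        gcongr
        exact le_add_of_nonneg_left hM
  · -- `δ = √(A / D)` makes the two terms `A` and `D δ²` equal
    have hD : 0 < D := pos_of_mul_pos_left (hA.trans hAY) (sq_nonneg Y)
    have hAD : 0 < A / D := div_pos hA hD
    have hδ : 0 < √(A / D) := Real.sqrt_pos.2 hAD
    have hδY : √(A / D) ≤ Y :=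
      Real.sqrt_le_iff.2 ⟨hY.le, by rw [div_le_iff₀ hD, mul_comm]; exact hAY.le⟩
    have hδ2 : √(A / D) ^ 2 = A / D := Real.sq_sqrt hAD.le
    have hδα : √(A / D) ^ (α + 1) = A ^ ((1 + α) / 2) / D ^ ((1 + α) / 2) := by
      rw [Real.sqrt_eq_rpow, ← Real.rpow_mul hAD.le, Real.div_rpow hA.le hD.le]
      ring_nf
    have hQ : A ^ ((1 - α) / 2) = A / A ^ ((1 + α) / 2) := by
      rw [show (1 - α) / 2 = 1 - (1 + α) / 2 by ring, Real.rpow_sub hA, Real.rpow_one]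
    have hx := h (√(A / D)) ⟨hδ, hδY⟩
    rw [hδ2, hδα, mul_div_cancel₀ _ hD.ne', ← two_mul, mul_div, div_le_iff₀ (by positivity)] at hx
    rw [hQ]
    calc x ≤ c * (2 * A) * D ^ ((1 + α) / 2) / A ^ ((1 + α) / 2) :=
          (le_div_iff₀ (by positivity)).2 hx
      _ = 2 * c * (A / A ^ ((1 + α) / 2) * D ^ ((1 + α) / 2)) := by ring
      _ ≤ _ := by
        gcongr
        exact le_add_of_nonneg_right (by positivity)

/-- one-dimensional multiplicative weighted trace inequality. -/
theorem statement6 (Y α : ℝ) (hY : 0 < Y) (hα : α ∈ Set.Ioo (-1 : ℝ) 1) :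
    ∃ C : ℝ, 0 < C ∧ ∀ v : ℝ → ℝ,
      ContinuousOn v (Set.Icc 0 Y) →
      ContDiffOn ℝ 1 v (Set.Ioo 0 Y) →
      MeasureTheory.IntegrableOn (fun y => y ^ α * (v y) ^ 2) (Set.Ioo 0 Y) →
      MeasureTheory.IntegrableOn (fun y => y ^ α * (deriv v y) ^ 2) (Set.Ioo 0 Y) →
      (v 0) ^ 2 ≤ C * ((∫ y in Set.Ioo 0 Y, y ^ α * (v y) ^ 2) ^ ((1 - α) / 2) *
          (∫ y in Set.Ioo 0 Y, y ^ α * (deriv v y) ^ 2) ^ ((1 + α) / 2)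
        + ∫ y in Set.Ioo 0 Y, y ^ α * (v y) ^ 2) := by
  obtain ⟨hα₁, hα₂⟩ := hα
  have hα1 : 0 < α + 1 := by linarith
  have h1α : 0 < 1 - α := by linarith
  set c := (α + 1) * (2 + 1 / (1 - α))
  refine ⟨2 * c * (1 + 1 / Y ^ (α + 1)), by positivity, fun v hvc hv hA hD => ?_⟩
  set A := weightedSqNorm α Y v
  set D := weightedSqNorm α Y (deriv v)
  have hA0 : 0 ≤ A := weightedSqNorm_nonneg α Y v
  have hD0 : 0 ≤ D := weightedSqNorm_nonneg α Y (deriv v)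
  have key : ∀ δ ∈ Ioc 0 Y, v 0 ^ 2 * δ ^ (α + 1) ≤ c * (A + D * δ ^ 2) := fun δ hδ => by
    refine (sq_mul_rpow_le_weightedSqNorm hα₁ hα₂ hδ hvc (hv.differentiableOn one_ne_zero) hA
      hD).trans ?_
    rw [mul_assoc]
    gcongr
    rw [div_eq_mul_one_div _ (1 - α)]
    nlinarith [mul_nonneg (one_div_nonneg.2 h1α.le) hA0, mul_nonneg hD0 (sq_nonneg δ)]
  calc v 0 ^ 2 ≤ 2 * c * (A ^ ((1 - α) / 2) * D ^ ((1 + α) / 2) + A / Y ^ (α + 1)) :=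
        le_of_forall_mul_rpow_le_mul_add_mul_sq hY hα₂ (by positivity) hA0 hD0 key
    _ ≤ 2 * c * (1 + 1 / Y ^ (α + 1)) * (A ^ ((1 - α) / 2) * D ^ ((1 + α) / 2) + A) := by
      have ht : 0 ≤ 1 / Y ^ (α + 1) := by positivity
      have hM : 0 ≤ A ^ ((1 - α) / 2) * D ^ ((1 + α) / 2) := by positivity
      rw [div_eq_mul_one_div A, mul_assoc (2 * c)]
      gcongr
      nlinarith [mul_nonneg ht hM]
end
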